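/- Let G be an infinite nilpotent group with the property K̄∞. Then the commutator subgroup ⁅G,G⁆ of G is finite. -/

import Mathlib

/-- A group `G` has property K̄∞ if for every subgroup `X` of `G` the set of
subgroups of the form `⁅X, H⁆`, with `H` ranging over infinite subgroups of `G`,
is finite. -/
def PropKInf (G : Type*) [Group G] : Prop :=
  ∀ X : Subgroup G, {S : Subgroup G | ∃ H : Subgroup G, Infinite H ∧ S = ⁅X, H⁆}.Finite

/-!
Induct on the nilpotency class. The last nontrivial term `L` of the lower central series is
central. If `L` is finite, pass to `G ⧸ L`, which is again infinite with K̄∞ and of smaller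
class. If `L` is infinite, so is the centre `Z`, and since `⁅X, H⁆ = ⁅X, H ⊔ Z⁆` with `H ⊔ Z`
infinite, `G` has property K: finitely many subgroups `⁅X, H⁆` for arbitrary `H`.

Under K the same induction needs no case distinction. If `⁅M, G⁆` is central, then
`m ↦ ⁅m, g⁆` is a homomorphism on `M` with image `⁅M, ⟨g⟩⁆`, so every subgroup of `⁅M, ⟨g⟩⁆`
has the form `⁅⟨g⟩, U⁆`. Property K leaves `⁅M, ⟨g⟩⁆` only finitely many subgroups, so it is
finite, and `⁅M, G⁆` is the join of finitely many of these finite central subgroups.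
-/

open Subgroup
open scoped commutatorElement

section General

variable {G : Type*} [Group G]

theorem Group.finite_of_finite_subgroup [Finite (Subgroup G)] : Finite G := by
  have hfinOrder (x : G) : IsOfFinOrder x := by
    by_contra hx
    have hinj : Function.Injective fun n : ℕ => zpowers (x ^ (n + 1)) := by
      intro n m h
      rcases (zpowers_eq_zpowers_iff (by simpa [isOfFinOrder_pow] using hx)).mp h with h | h
      · simpa using injective_pow_iff_not_isOfFinOrder.mpr hx h
      · refine absurd (isOfFinOrder_iff_pow_eq_one.mpr ⟨n + 1 + (m + 1), by omega, ?_⟩) hx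
        rw [pow_add, ← h, mul_inv_cancel]
    exact (Finite.of_injective _ hinj).false
  have hcover : (Set.univ : Set G) ⊆ ⋃ H ∈ Set.range (zpowers : G → Subgroup G), (H : Set G) :=
    fun x _ => Set.mem_biUnion (Set.mem_range_self x) (mem_zpowers x)
  refine Set.finite_univ_iff.mp (((Set.toFinite _).biUnion ?_).subset hcover)
  rintro _ ⟨x, rfl⟩
  exact finite_zpowers.mpr (hfinOrder x)

theorem Subgroup.finite_of_finite_setOf_le (H : Subgroup G)
    (h : {K : Subgroup G | K ≤ H}.Finite) : Finite H := by
  have := h.to_subtype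
  have : Finite (Subgroup H) :=
    Finite.of_injective
      (fun K : Subgroup H => (⟨K.map H.subtype, map_subtype_le K⟩ : {K : Subgroup G | K ≤ H}))
      fun K L hKL => map_injective H.subtype_injective (congrArg Subtype.val hKL)
  exact Group.finite_of_finite_subgroup

theorem Subgroup.normal_of_le_center {H : Subgroup G} (h : H ≤ center G) : H.Normal :=
  ⟨fun n hn g => by simpa [(mem_center_iff.mp (h hn) g)] using hn⟩

theorem Subgroup.finite_sSup_of_le_center {S : Set (Subgroup G)} (hS : S.Finite)
    (hcenter : ∀ H ∈ S, H ≤ center G) (hfinite : ∀ H ∈ S, Finite H) : Finite ↥(sSup S) := by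
  induction S, hS using Set.Finite.induction_on with
  | empty => simp only [sSup_empty]; infer_instance
  | @insert H S _ _ ih =>
    rw [sSup_insert]
    have := normal_of_le_center (sSup_le fun K hK => hcenter K (Set.mem_insert_of_mem H hK))
    have : Finite H := hfinite H (Set.mem_insert H S)
    have : Finite ↥(sSup S) := ih (fun K hK => hcenter K (Set.mem_insert_of_mem H hK))
      (fun K hK => hfinite K (Set.mem_insert_of_mem H hK))
    refine Set.Finite.to_subtype ?_
    rw [mul_normal]
    exact (Set.toFinite (H : Set G)).mul (Set.toFinite _)

theorem commutatorElement_mul_right_of_mem_center {a c : G} (b : G) (h : ⁅a, c⁆ ∈ center G) :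
    ⁅a, b * c⁆ = ⁅a, b⁆ * ⁅a, c⁆ := by
  rw [commutatorElement_mul_right_eq_mul_conj, mul_assoc _ b, mem_center_iff.mp h b, mul_assoc,
    mul_inv_cancel_right]

theorem commutatorElement_mul_left_of_mem_center {b c : G} (a : G) (h : ⁅b, c⁆ ∈ center G) :
    ⁅a * b, c⁆ = ⁅a, c⁆ * ⁅b, c⁆ := by
  rw [commutatorElement_mul_left_eq_conj_mul, mem_center_iff.mp h a, mul_inv_cancel_right,
    mem_center_iff.mp h]

theorem Subgroup.commutator_sup_center_right (X H : Subgroup G) :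
    ⁅X, H ⊔ center G⁆ = ⁅X, H⁆ := by
  refine le_antisymm ?_ (commutator_mono le_rfl le_sup_left)
  rw [commutator_le]
  intro x hx g hg
  rw [← SetLike.mem_coe, mul_normal] at hg
  obtain ⟨h, hh, z, hz, rfl⟩ := hg
  have hxz : ⁅x, z⁆ = 1 :=
    commutatorElement_eq_one_iff_commute.mpr (mem_center_iff.mp hz x)
  rw [commutatorElement_mul_right_of_mem_center h (hxz ▸ one_mem _), hxz, mul_one]
  exact commutator_mem_commutator hx hh

theorem Subgroup.commutator_top_eq_iSup_zpowers (M : Subgroup G) :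
    ⁅M, ⊤⁆ = ⨆ g : G, ⁅M, zpowers g⁆ :=
  le_antisymm
    (commutator_le.mpr fun _ hm g _ =>
      mem_iSup_of_mem g (commutator_mem_commutator hm (mem_zpowers g)))
    (iSup_le fun _ => commutator_mono le_rfl le_top)

end General

def PropK (G : Type*) [Group G] : Prop :=
  ∀ X : Subgroup G, {S : Subgroup G | ∃ H : Subgroup G, S = ⁅X, H⁆}.Finite

section CentralCommutators

variable {G : Type*} [Group G] {M : Subgroup G}

theorem commutatorElement_zpow_right_of_forall_mem_center {m : G}
    (hm : ∀ g : G, ⁅m, g⁆ ∈ center G) (g : G) (k : ℤ) : ⁅m, g ^ k⁆ = ⁅m, g⁆ ^ k :=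
  map_zpow (MonoidHom.mk' (fun g => ⁅m, g⁆)
    fun a b => commutatorElement_mul_right_of_mem_center a (hm b)) g k

def commutatorLeftHom (hM : ⁅M, ⊤⁆ ≤ center G) (g : G) : M →* G :=
  MonoidHom.mk' (fun m => ⁅(m : G), g⁆)
    fun a b => commutatorElement_mul_left_of_mem_center (a : G)
      (hM (commutator_mem_commutator b.2 (mem_top g)))

theorem commutator_map_subtype_zpowers (hM : ⁅M, ⊤⁆ ≤ center G) (g : G) (U : Subgroup M) :
    ⁅U.map M.subtype, zpowers g⁆ = U.map (commutatorLeftHom hM g) := by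
  refine le_antisymm ?_ ?_
  · rw [commutator_le]
    rintro _ ⟨m, hm, rfl⟩ _ ⟨k, rfl⟩
    have hcenter (h : G) : ⁅(m : G), h⁆ ∈ center G :=
      hM (commutator_mem_commutator m.2 (mem_top h))
    refine ⟨m ^ k, zpow_mem hm k, ?_⟩
    rw [map_zpow]
    exact (commutatorElement_zpow_right_of_forall_mem_center hcenter g k).symm
  · rw [map_le_iff_le_comap]
    intro m hm
    exact commutator_mem_commutator (mem_map_of_mem M.subtype hm) (mem_zpowers g)

theorem PropK.finite_commutator_zpowers (hK : PropK G) (hM : ⁅M, ⊤⁆ ≤ center G) (g : G) :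
    Finite ↥⁅M, zpowers g⁆ := by
  refine finite_of_finite_setOf_le _ ((hK (zpowers g)).subset fun T hT => ?_)
  have hrange : T ≤ (commutatorLeftHom hM g).range := by
    rw [MonoidHom.range_eq_map, ← commutator_map_subtype_zpowers hM g, ← MonoidHom.range_eq_map,
      subtype_range]
    exact hT
  refine ⟨(T.comap (commutatorLeftHom hM g)).map M.subtype, ?_⟩
  rw [commutator_comm, commutator_map_subtype_zpowers hM g, map_comap_eq_self hrange]

theorem PropK.finite_commutator_top (hK : PropK G) (hM : ⁅M, ⊤⁆ ≤ center G) :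
    Finite ↥⁅M, (⊤ : Subgroup G)⁆ := by
  rw [commutator_top_eq_iSup_zpowers, ← sSup_range]
  refine finite_sSup_of_le_center ((hK M).subset ?_) ?_ ?_ <;> rintro _ ⟨g, rfl⟩
  · exact ⟨zpowers g, rfl⟩
  · exact (commutator_mono le_rfl le_top).trans hM
  · exact hK.finite_commutator_zpowers hM g

end CentralCommutators

section Quotients

variable {G Q : Type*} [Group G] [Group Q]

theorem Subgroup.map_commutator_comap_of_surjective {f : G →* Q} (hf : Function.Surjective f)
    (X H : Subgroup Q) : ⁅X.comap f, H.comap f⁆.map f = ⁅X, H⁆ := by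
  rw [map_commutator, map_comap_eq_self_of_surjective hf, map_comap_eq_self_of_surjective hf]

theorem PropK.of_surjective {f : G →* Q} (hf : Function.Surjective f) (hK : PropK G) :
    PropK Q := fun X =>
  ((hK (X.comap f)).image (map f)).subset fun _ ⟨H, hS⟩ =>
    ⟨_, ⟨H.comap f, rfl⟩, hS ▸ map_commutator_comap_of_surjective hf X H⟩

theorem PropKInf.of_surjective {f : G →* Q} (hf : Function.Surjective f) (hG : PropKInf G) :
    PropKInf Q := fun X =>
  ((hG (X.comap f)).image (map f)).subset fun _ ⟨H, _, hS⟩ =>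
    ⟨_, ⟨H.comap f, Infinite.of_surjective _ (f.subgroupComap_surjective_of_surjective H hf), rfl⟩,
      hS ▸ map_commutator_comap_of_surjective hf X H⟩

theorem PropKInf.propK [Infinite (center G)] (hG : PropKInf G) : PropK G := fun X =>
  (hG X).subset fun _ ⟨H, hS⟩ =>
    ⟨H ⊔ center G, Infinite.of_injective _ (inclusion_injective le_sup_right),
      hS.trans (commutator_sup_center_right X H).symm⟩

theorem Subgroup.finite_of_finite_map {f : G →* Q} [Finite f.ker] {H : Subgroup G}
    [Finite (H.map f)] : Finite H := by
  rw [(f.domRestrict H).finite_iff_finite_ker_range, MonoidHom.ker_domRestrict,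
    MonoidHom.domRestrict_range]
  refine ⟨Finite.of_injective (fun x : f.ker.subgroupOf H => (⟨x.1, x.2⟩ : f.ker)) ?_, ‹_›⟩
  exact fun x y h => Subtype.ext (Subtype.ext (congrArg (fun z : f.ker => (z : G)) h))

theorem finite_commutator_of_finite_quotient (N : Subgroup G) [N.Normal] [Finite N]
    (h : Finite (commutator (G ⧸ N))) : Finite (commutator G) := by
  have : Finite (QuotientGroup.mk' N).ker := by rwa [QuotientGroup.ker_mk']
  have : Finite ((commutator G).map (QuotientGroup.mk' N)) := by
    rwa [commutator_def, map_commutator, map_top_of_surjective _ (QuotientGroup.mk'_surjective N)]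
  exact finite_of_finite_map (f := QuotientGroup.mk' N)

theorem lowerCentralSeries_quotient_eq_bot (n : ℕ) :
    (⊤ : Subgroup (G ⧸ (⊤ : Subgroup G).lowerCentralSeries n)).lowerCentralSeries n = ⊥ := by
  rw [← map_top_of_surjective _ (QuotientGroup.mk'_surjective _), ← map_lowerCentralSeries,
    Subgroup.map_eq_bot_iff, QuotientGroup.ker_mk']

end Quotients

section Nilpotent

variable {G : Type*} [Group G]

theorem PropK.finite_commutator_of_lowerCentralSeries_eq_bot (n : ℕ) (hK : PropK G)
    (hn : (⊤ : Subgroup G).lowerCentralSeries (n + 1) = ⊥) : Finite (commutator G) := by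
  induction n generalizing G with
  | zero => rw [← top_lowerCentralSeries_one, hn]; infer_instance
  | succ n ih =>
    let L := (⊤ : Subgroup G).lowerCentralSeries (n + 1)
    have : Finite L := hK.finite_commutator_top (commutator_top_right_eq_bot_iff_le_center.mp hn)
    exact finite_commutator_of_finite_quotient L
      (ih (hK.of_surjective (QuotientGroup.mk'_surjective L))
        (lowerCentralSeries_quotient_eq_bot _))

theorem PropKInf.finite_commutator_of_lowerCentralSeries_eq_bot [Infinite G] (n : ℕ)
    (hG : PropKInf G) (hn : (⊤ : Subgroup G).lowerCentralSeries (n + 1) = ⊥) :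
    Finite (commutator G) := by
  induction n generalizing G with
  | zero => rw [← top_lowerCentralSeries_one, hn]; infer_instance
  | succ n ih =>
    let L := (⊤ : Subgroup G).lowerCentralSeries (n + 1)
    have hL : L ≤ center G := commutator_top_right_eq_bot_iff_le_center.mp hn
    by_cases hfinite : Finite L
    · have : Infinite (G ⧸ L) :=
        not_finite_iff_infinite.mp fun _ => (Finite.of_subgroup_quotient L).false
      exact finite_commutator_of_finite_quotient L
        (ih (hG.of_surjective (QuotientGroup.mk'_surjective L))
          (lowerCentralSeries_quotient_eq_bot _))
    · have : Infinite L := not_finite_iff_infinite.mp hfinite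
      have : Infinite (center G) := Infinite.of_injective _ (inclusion_injective hL)
      exact hG.propK.finite_commutator_of_lowerCentralSeries_eq_bot (n + 1) hn

end Nilpotent

theorem stmt_14 (G : Type*) [Group G] (hinf : Infinite G)
    (hnilp : Group.IsNilpotent G) (hG : PropKInf G) :
    Finite (commutator G) := by
  obtain ⟨n, hn⟩ := Subgroup.nilpotent_iff_lowerCentralSeries.mp hnilp
  exact hG.finite_commutator_of_lowerCentralSeries_eq_bot n
    (le_bot_iff.mp (hn ▸ Subgroup.lowerCentralSeries_antitone ⊤ n.le_succ))
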